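/- arXiv:1703.09533 — 2 statements merged into one kernel-verified Lean document; each statement's English description precedes it below -/
import Mathlib

section
/- Let p, s, q be points in ℝ², let t ≥ 3 be an integer, and let d be a metric on a set containing p, s, q satisfying d(x,y) ≤ |xy| whenever the segment xy is 'visible' and d satisfies the triangle inequality. Suppose s' is the point on segment pq with |ps'| = |ps| ≤ |pq|, the angle ∠(s,p,q) is at most 2π/t, and d(s,s') ≤ |ss'|, d(s',q) ≤ |s'q|. Then d(s,q) ≤ |pq| − (1 − 2 sin(π/t))|ps|. -/
open Real EuclideanGeometry

section Chord

variable {V P : Type*} [NormedAddCommGroup V] [InnerProductSpace ℝ V] [MetricSpace P]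
  [NormedAddTorsor V P]

/-- By the law of cosines, the chord `ss'` of a circle of radius `r` about `p` has
`|ss'|² = 2r²(1 - cos ∠sps') ≤ 2r²(1 - cos 2x) = (2r sin x)²`. -/
theorem dist_le_two_mul_sin_mul_dist_of_dist_eq_of_angle_le {p s s' : P} {x : ℝ}
    (heq : dist p s' = dist p s) (hx₀ : 0 ≤ x) (hxπ : x ≤ π / 2) (hangle : ∠ s p s' ≤ 2 * x) :
    dist s s' ≤ 2 * sin x * dist p s := by
  have hcos : cos (2 * x) ≤ cos (∠ s p s') :=
    cos_le_cos_of_nonneg_of_le_pi (angle_nonneg _ _ _) (by linarith) hangle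
  have hlaw := law_cos s p s'
  rw [dist_comm s p, dist_comm s' p, heq] at hlaw
  have hsq : dist s s' ^ 2 ≤ (2 * sin x * dist p s) ^ 2 := by
    nlinarith [cos_two_mul' x, sin_sq_add_cos_sq x, mul_nonneg (sq_nonneg (dist p s)) (sub_nonneg.mpr hcos)]
  have hsin : 0 ≤ sin x := sin_nonneg_of_nonneg_of_le_pi hx₀ (by linarith [pi_pos])
  exact (pow_le_pow_iff_left₀ dist_nonneg (by positivity) two_ne_zero).mp hsq

theorem dist_le_two_mul_sin_mul_dist_of_wbtw {p s s' q : P} {x : ℝ} (hseg : Wbtw ℝ p s' q)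
    (heq : dist p s' = dist p s) (hx₀ : 0 ≤ x) (hxπ : x ≤ π / 2) (hangle : ∠ s p q ≤ 2 * x) :
    dist s s' ≤ 2 * sin x * dist p s := by
  rcases eq_or_ne s' p with rfl | hs'p
  · rw [dist_self, eq_comm, dist_eq_zero] at heq
    simp [heq]
  · rw [← hseg.angle_eq_right s hs'p] at hangle
    exact dist_le_two_mul_sin_mul_dist_of_dist_eq_of_angle_le heq hx₀ hxπ hangle

end Chord

theorem stmt_3_general (p s q s' : EuclideanSpace ℝ (Fin 2)) (t : ℕ) (ht : 3 ≤ t)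
    (d : EuclideanSpace ℝ (Fin 2) → EuclideanSpace ℝ (Fin 2) → ℝ)
    (htri : d s q ≤ d s s' + d s' q)
    (hseg : s' ∈ segment ℝ p q)
    (heq : dist p s' = dist p s)
    (hangle : EuclideanGeometry.angle s p q ≤ 2 * π / t)
    (hds : d s s' ≤ dist s s') (hdq : d s' q ≤ dist s' q) :
    d s q ≤ dist p q - (1 - 2 * Real.sin (π / t)) * dist p s := by
  have hwbtw : Wbtw ℝ p s' q := mem_segment_iff_wbtw.mp hseg
  have hrest : dist s' q = dist p q - dist p s := by
    rw [← hwbtw.dist_add_dist, heq]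
    ring
  have hπt : π / t ≤ π / 2 :=
    div_le_div_of_nonneg_left pi_pos.le two_pos (by exact_mod_cast (by omega : 2 ≤ t))
  have hchord : dist s s' ≤ 2 * sin (π / t) * dist p s :=
    dist_le_two_mul_sin_mul_dist_of_wbtw hwbtw heq (by positivity) hπt
      (by rwa [mul_div_assoc] at hangle)
  linarith

/-- Abstract version of the Yao/Θ-graph cone lemma (Lemma 3.1):
`d` is a shortest-path style distance on the plane that satisfies the triangle
inequality and is bounded by the Euclidean distance on the relevant visible pairs. -/
theorem stmt_3 (p s q s' : EuclideanSpace ℝ (Fin 2)) (t : ℕ) (ht : 3 ≤ t)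
    (d : EuclideanSpace ℝ (Fin 2) → EuclideanSpace ℝ (Fin 2) → ℝ)
    (htri : d s q ≤ d s s' + d s' q)
    (hseg : s' ∈ segment ℝ p q)
    (heq : dist p s' = dist p s) (hle : dist p s ≤ dist p q)
    (hangle : EuclideanGeometry.angle s p q ≤ 2 * π / t)
    (hds : d s s' ≤ dist s s') (hdq : d s' q ≤ dist s' q) :
    d s q ≤ dist p q - (1 - 2 * Real.sin (π / t)) * dist p s :=
  stmt_3_general p s q s' t ht d htri hseg heq hangle hds hdq
end

section
/- Let d : V × V → ℝ be a metric on a finite set V of points in the plane, let p, q, q', s ∈ V, ε > 0 and integer t ≥ 3 with 2 sin(π/t) ≤ 1 − 1/(1+ε). Assume d(p, q) = |pq'| + d(q', q) (q' is the first vertex on a shortest path from p to q), d(s, q') ≤ |pq'| − (1 − 2 sin(π/t))|ps|. Then d(s, q) ≤ d(p, q) − |ps|/(1 + ε). -/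
open Real

theorem div_le_mul_of_one_div_le {a b c : ℝ} (ha : 0 ≤ a) (h : 1 / b ≤ c) : a / b ≤ c * a := by
  rw [div_eq_mul_one_div, mul_comm]
  exact mul_le_mul_of_nonneg_right h ha

theorem le_sub_mul_dist_of_first_step {X : Type*} [PseudoMetricSpace X] (d : X → X → ℝ)
    {p q q' s : X} {c : ℝ} (htri : d s q ≤ d s q' + d q' q)
    (hfirst : d p q = dist p q' + d q' q) (hcone : d s q' ≤ dist p q' - c * dist p s) :
    d s q ≤ d p q - c * dist p s := by
  linarith

theorem stmt_7_general (p q q' s : EuclideanSpace ℝ (Fin 2))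
    (d : EuclideanSpace ℝ (Fin 2) → EuclideanSpace ℝ (Fin 2) → ℝ)
    (ε : ℝ) (t : ℕ)
    (hsin : 2 * Real.sin (π / t) ≤ 1 - 1 / (1 + ε))
    (htri : d s q ≤ d s q' + d q' q)
    (hfirst : d p q = dist p q' + d q' q)
    (hcone : d s q' ≤ dist p q' - (1 - 2 * Real.sin (π / t)) * dist p s) :
    d s q ≤ d p q - dist p s / (1 + ε) := by
  have hprogress : dist p s / (1 + ε) ≤ (1 - 2 * Real.sin (π / t)) * dist p s :=
    div_le_mul_of_one_div_le dist_nonneg (by linarith)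
  linarith [le_sub_mul_dist_of_first_step d htri hfirst hcone]

/-- Lemma 5.2: per-step progress of the routing scheme.  Here `d` is the
shortest-path metric on the vertex set, given abstractly via the triangle
inequality instance needed. -/
theorem stmt_7 (p q q' s : EuclideanSpace ℝ (Fin 2))
    (d : EuclideanSpace ℝ (Fin 2) → EuclideanSpace ℝ (Fin 2) → ℝ)
    (ε : ℝ) (hε : 0 < ε) (t : ℕ) (ht : 3 ≤ t)
    (hsin : 2 * Real.sin (π / t) ≤ 1 - 1 / (1 + ε))
    (htri : d s q ≤ d s q' + d q' q)
    (hfirst : d p q = dist p q' + d q' q)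
    (hcone : d s q' ≤ dist p q' - (1 - 2 * Real.sin (π / t)) * dist p s) :
    d s q ≤ d p q - dist p s / (1 + ε) :=
  stmt_7_general p q q' s d ε t hsin htri hfirst hcone
end
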